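/- arXiv:2309.15387 — 4 statements merged into one kernel-verified Lean document; each statement's English description precedes it below -/
import Mathlib

section
/- Let c ∈ (−1,1), a = √((1+c)/2), b = √((1−c)/2), let A11, A12, A13, A22, A23, A33 be real numbers, and set H12 = A11*A22 − A12², H13 = A11*A33 − A13², H23 = A22*A33 − A23², K = A11*A22*A33 + 2*A12*A13*A23 − A11*A23² − A22*A13² − A33*A12², and ρ = 2(H12 + H13 + H23) − 2c. Define D : ℝ → ℝ by D(l) = (1 − l*A11)·cos(a*l)·cosh(b*l) + (−A22 + l*H12)·(sin(a*l)/a)·cosh(b*l) + (−A33 + l*H13)·cos(a*l)·(sinh(b*l)/b) + (H23 − l*K)·(sin(a*l)/a)·(sinh(b*l)/b). Then the sixth derivative of D at 0 equals c + 4c³ + (−4 − 12c + 16c²)·H12 + (−4 + 12c + 16c²)·H13 + (4c² − 1)·ρ. -/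
/-!
Every function `l ↦ Σ (p + q l) · f(l)`, with `f` running over the four products of
`cos (a l)`, `sin (a l) / a` with `cosh (b l)`, `sinh (b l) / b`, has a derivative of the
same shape, so the sixth derivative of `D` is such a function whose value at `0` is the constant
coefficient of `cos (a l) cosh (b l)`, a polynomial in `a² = (1 + c)/2` and `b² = (1 - c)/2`.
-/

structure JacobiCoeffs where
  (p1 q1 p2 q2 p3 q3 p4 q4 : ℝ)

namespace JacobiCoeffs

noncomputable def eval (a b : ℝ) (v : JacobiCoeffs) (l : ℝ) : ℝ :=
  (v.p1 + v.q1 * l) * (Real.cos (a * l) * Real.cosh (b * l))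
  + (v.p2 + v.q2 * l) * ((Real.sin (a * l) / a) * Real.cosh (b * l))
  + (v.p3 + v.q3 * l) * (Real.cos (a * l) * (Real.sinh (b * l) / b))
  + (v.p4 + v.q4 * l) * ((Real.sin (a * l) / a) * (Real.sinh (b * l) / b))

def derivCoeffs (a b : ℝ) (v : JacobiCoeffs) : JacobiCoeffs where
  p1 := v.q1 + v.p2 + v.p3
  q1 := v.q2 + v.q3
  p2 := v.q2 - a ^ 2 * v.p1 + v.p4
  q2 := -a ^ 2 * v.q1 + v.q4
  p3 := v.q3 + b ^ 2 * v.p1 + v.p4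
  q3 := b ^ 2 * v.q1 + v.q4
  p4 := v.q4 + b ^ 2 * v.p2 - a ^ 2 * v.p3
  q4 := b ^ 2 * v.q2 - a ^ 2 * v.q3

variable {a b : ℝ}

theorem eval_zero (v : JacobiCoeffs) : eval a b v 0 = v.p1 := by
  simp [eval]

theorem hasDerivAt_eval (ha : a ≠ 0) (hb : b ≠ 0) (v : JacobiCoeffs) (l : ℝ) :
    HasDerivAt (eval a b v) (eval a b (derivCoeffs a b v) l) l := by
  have hal : HasDerivAt (fun l : ℝ => a * l) a l := by
    simpa using (hasDerivAt_id l).const_mul a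
  have hbl : HasDerivAt (fun l : ℝ => b * l) b l := by
    simpa using (hasDerivAt_id l).const_mul b
  have hcos := hal.cos
  have hsin := hal.sin.div_const a
  have hcosh := hbl.cosh
  have hsinh := hbl.sinh.div_const b
  have haff (p q : ℝ) : HasDerivAt (fun l : ℝ => p + q * l) q l := by
    simpa using ((hasDerivAt_id l).const_mul q).const_add p
  have H := ((((haff v.p1 v.q1).mul (hcos.mul hcosh)).add
    ((haff v.p2 v.q2).mul (hsin.mul hcosh))).add
    ((haff v.p3 v.q3).mul (hcos.mul hsinh))).add
    ((haff v.p4 v.q4).mul (hsin.mul hsinh))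
  refine H.congr_deriv ?_
  simp only [eval, derivCoeffs, Pi.mul_apply]
  field_simp
  ring

theorem deriv_eval (ha : a ≠ 0) (hb : b ≠ 0) (v : JacobiCoeffs) :
    deriv (eval a b v) = eval a b (derivCoeffs a b v) :=
  funext fun l => (hasDerivAt_eval ha hb v l).deriv

theorem iteratedDeriv_eval (ha : a ≠ 0) (hb : b ≠ 0) (n : ℕ) (v : JacobiCoeffs) :
    iteratedDeriv n (eval a b v) = eval a b ((derivCoeffs a b)^[n] v) := by
  induction n generalizing v with
  | zero => rfl
  | succ n ih => rw [iteratedDeriv_succ', deriv_eval ha hb, ih, Function.iterate_succ_apply]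

end JacobiCoeffs

theorem detQ_sixth_deriv_S2xH2_general (c : ℝ) (hc : c ∈ Set.Ioo (-1 : ℝ) 1)
    (a b : ℝ) (ha : a = Real.sqrt ((1 + c)/2)) (hb : b = Real.sqrt ((1 - c)/2))
    (A11 A22 A33 H12 H13 H23 K ρ : ℝ)
    (hρ : ρ = 2*(H12 + H13 + H23) - 2*c)
    (D : ℝ → ℝ)
    (hD : ∀ l : ℝ, D l =
      (1 - l*A11) * Real.cos (a*l) * Real.cosh (b*l)
      + (-A22 + l*H12) * (Real.sin (a*l)/a) * Real.cosh (b*l)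
      + (-A33 + l*H13) * Real.cos (a*l) * (Real.sinh (b*l)/b)
      + (H23 - l*K) * (Real.sin (a*l)/a) * (Real.sinh (b*l)/b)) :
    iteratedDeriv 6 D 0 =
      c + 4*c^3 + (-4 - 12*c + 16*c^2)*H12 + (-4 + 12*c + 16*c^2)*H13 + (4*c^2 - 1)*ρ := by
  obtain ⟨hc1, hc2⟩ := hc
  have ha0 : a ≠ 0 := ha ▸ Real.sqrt_ne_zero'.mpr (by linarith)
  have hb0 : b ≠ 0 := hb ▸ Real.sqrt_ne_zero'.mpr (by linarith)
  have hA : a ^ 2 = (1 + c) / 2 := by rw [ha, Real.sq_sqrt (by linarith)]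
  have hB : b ^ 2 = (1 - c) / 2 := by rw [hb, Real.sq_sqrt (by linarith)]
  have hDeval : D = JacobiCoeffs.eval a b ⟨1, -A11, -A22, H12, -A33, H13, H23, -K⟩ := by
    funext l
    rw [hD, JacobiCoeffs.eval]
    ring
  rw [hDeval, JacobiCoeffs.iteratedDeriv_eval ha0 hb0, JacobiCoeffs.eval_zero]
  simp only [Function.iterate_succ_apply', Function.iterate_zero_apply,
    JacobiCoeffs.derivCoeffs, hA, hB, hρ]
  ring

theorem detQ_sixth_deriv_S2xH2 (c : ℝ) (hc : c ∈ Set.Ioo (-1 : ℝ) 1)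
    (a b : ℝ) (ha : a = Real.sqrt ((1 + c)/2)) (hb : b = Real.sqrt ((1 - c)/2))
    (A11 A12 A13 A22 A23 A33 H12 H13 H23 K ρ : ℝ)
    (hH12 : H12 = A11*A22 - A12^2)
    (hH13 : H13 = A11*A33 - A13^2)
    (hH23 : H23 = A22*A33 - A23^2)
    (hK : K = A11*A22*A33 + 2*A12*A13*A23 - A11*A23^2 - A22*A13^2 - A33*A12^2)
    (hρ : ρ = 2*(H12 + H13 + H23) - 2*c)
    (D : ℝ → ℝ)
    (hD : ∀ l : ℝ, D l =
      (1 - l*A11) * Real.cos (a*l) * Real.cosh (b*l)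
      + (-A22 + l*H12) * (Real.sin (a*l)/a) * Real.cosh (b*l)
      + (-A33 + l*H13) * Real.cos (a*l) * (Real.sinh (b*l)/b)
      + (H23 - l*K) * (Real.sin (a*l)/a) * (Real.sinh (b*l)/b)) :
    iteratedDeriv 6 D 0 =
      c + 4*c^3 + (-4 - 12*c + 16*c^2)*H12 + (-4 + 12*c + 16*c^2)*H13 + (4*c^2 - 1)*ρ :=
  detQ_sixth_deriv_S2xH2_general c hc a b ha hb A11 A22 A33 H12 H13 H23 K ρ hρ D hD
end

section
/- Let c, ρ, H12, H13, α1, α2, α3, α4 be real numbers with c² < 1, and suppose that ρ + c = α1, that −1 − 2c² + (4 − 4c)·H12 − (4 + 4c)·H13 − 2c·ρ = α2, that c + 4c³ + (−4 − 12c + 16c²)·H12 + (−4 + 12c + 16c²)·H13 + (4c² − 1)·ρ = α3, and that (128c⁴ − 80c³ − 96c² + 40c + 8)·H12 + (128c⁴ + 80c³ − 96c² − 40c + 8)·H13 + (16c⁴ − 12c² + 1)·ρ + 16c⁵ − 4c³ − 3c = α4. Then 16·α2·c³ + (16·α1 + 12·α3)·c² + (4·α2 + 4)·c − α1 − 2·α3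 − α4 = 0. -/
theorem cubic_equation_for_C_S2xH2 (c ρ H12 H13 α1 α2 α3 α4 : ℝ) (hc : c^2 < 1)
    (h1 : ρ + c = α1)
    (h2 : -1 - 2*c^2 + (4 - 4*c)*H12 - (4 + 4*c)*H13 - 2*c*ρ = α2)
    (h3 : c + 4*c^3 + (-4 - 12*c + 16*c^2)*H12 + (-4 + 12*c + 16*c^2)*H13
      + (4*c^2 - 1)*ρ = α3)
    (h4 : (128*c^4 - 80*c^3 - 96*c^2 + 40*c + 8)*H12
      + (128*c^4 + 80*c^3 - 96*c^2 - 40*c + 8)*H13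
      + (16*c^4 - 12*c^2 + 1)*ρ + 16*c^5 - 4*c^3 - 3*c = α4) :
    16*α2*c^3 + (16*α1 + 12*α3)*c^2 + (4*α2 + 4)*c - α1 - 2*α3 - α4 = 0 := by
  subst h1 h2 h3 h4; ring
end

section
/- Let c ∈ (−1,1), a = √((1+c)/2), let A11, A12, A13, A22, A23, A33 be real numbers, and set H12 = A11*A22 − A12², H13 = A11*A33 − A13², H23 = A22*A33 − A23², K = A11*A22*A33 + 2*A12*A13*A23 − A11*A23² − A22*A13² − A33*A12², and ρ = 2(H12 + H13 + H23) + 1 − c. Define D : ℝ → ℝ by D(l) = (1 − l*A11)·cos(a*l) + (−A22 + l*H12)·(sin(a*l)/a) + (−A33 + l*H13)·l·cos(a*l) + (H23 − l*K)·l·(sin(a*l)/a). Then D(0) = 1, D'(0) = −(A11 + A22 + A33), D''(0) = ρ − 3/2 + c/2, the fourth derivative of D at 0 equals −((1 + c)/4)·(−5 + 3c + 4ρ + 16·H13), and the sixth derivative of D at 0 equals ((1 + c)²/8)·(6ρ + 48·H13 + 5c − 7). -/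
/-!
Each entry of the Jacobi-field matrix is a polynomial in `l` times `cos (a l)` or `sin (a l) / a`,
so `D` has the shape `p(l) cos (a l) + q(l) sin (a l) / a`. Differentiating keeps this shape and acts
on the pair of polynomials by `(p, q) ↦ (p' + q, q' - a² p)`. The derivatives of `D` at `0` are
therefore constant coefficients of iterates of this linear map, which for quadratic `p, q` are
explicit polynomials in `a² = (1 + c) / 2` and the coefficients.
-/

open Polynomial

noncomputable section

def trigPoly (a : ℝ) (p q : ℝ[X]) (l : ℝ) : ℝ :=
  p.eval l * Real.cos (a * l) + q.eval l * (Real.sin (a * l) / a)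

def trigPolyStep (a : ℝ) (pq : ℝ[X] × ℝ[X]) : ℝ[X] × ℝ[X] :=
  (derivative pq.1 + pq.2, derivative pq.2 - C (a ^ 2) * pq.1)

end

theorem hasDerivAt_trigPoly {a : ℝ} (ha : a ≠ 0) (p q : ℝ[X]) (l : ℝ) :
    HasDerivAt (trigPoly a p q)
      (trigPoly a (trigPolyStep a (p, q)).1 (trigPolyStep a (p, q)).2 l) l := by
  have hal : HasDerivAt (fun l : ℝ => a * l) a l := by
    simpa using (hasDerivAt_id l).const_mul a
  refine (((p.hasDerivAt l).mul hal.cos).add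
    ((q.hasDerivAt l).mul (hal.sin.div_const a))).congr_deriv ?_
  simp only [trigPoly, trigPolyStep, eval_add, eval_sub, eval_mul, eval_C, derivative_eval]
  field_simp
  ring

theorem iteratedDeriv_trigPoly {a : ℝ} (ha : a ≠ 0) (n : ℕ) (p q : ℝ[X]) :
    iteratedDeriv n (trigPoly a p q) =
      trigPoly a ((trigPolyStep a)^[n] (p, q)).1 ((trigPolyStep a)^[n] (p, q)).2 := by
  induction n generalizing p q with
  | zero => rfl
  | succ n ih =>
    have hderiv : deriv (trigPoly a p q) =
        trigPoly a (trigPolyStep a (p, q)).1 (trigPolyStep a (p, q)).2 :=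
      funext fun l => (hasDerivAt_trigPoly ha p q l).deriv
    rw [iteratedDeriv_succ', hderiv, ih, Function.iterate_succ_apply]

theorem iteratedDeriv_trigPoly_zero {a : ℝ} (ha : a ≠ 0) (n : ℕ) (p q : ℝ[X]) :
    iteratedDeriv n (trigPoly a p q) 0 = ((trigPolyStep a)^[n] (p, q)).1.coeff 0 := by
  simp [iteratedDeriv_trigPoly ha, trigPoly, coeff_zero_eq_eval_zero]

theorem coeff_trigPolyStep_fst (a : ℝ) (pq : ℝ[X] × ℝ[X]) (k : ℕ) :
    (trigPolyStep a pq).1.coeff k = pq.1.coeff (k + 1) * (k + 1) + pq.2.coeff k := by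
  simp only [trigPolyStep, coeff_add, coeff_derivative]

theorem coeff_trigPolyStep_snd (a : ℝ) (pq : ℝ[X] × ℝ[X]) (k : ℕ) :
    (trigPolyStep a pq).2.coeff k = pq.2.coeff (k + 1) * (k + 1) - a ^ 2 * pq.1.coeff k := by
  simp only [trigPolyStep, coeff_sub, coeff_derivative, coeff_C_mul]

theorem detQ_derivs_S2xR2_general (c : ℝ) (hc : c ∈ Set.Ioo (-1 : ℝ) 1)
    (a : ℝ) (ha : a = Real.sqrt ((1 + c)/2))
    (A11 A22 A33 H12 H13 H23 K ρ : ℝ)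
    (hρ : ρ = 2*(H12 + H13 + H23) + 1 - c)
    (D : ℝ → ℝ)
    (hD : ∀ l : ℝ, D l =
      (1 - l*A11) * Real.cos (a*l)
      + (-A22 + l*H12) * (Real.sin (a*l)/a)
      + (-A33 + l*H13) * l * Real.cos (a*l)
      + (H23 - l*K) * l * (Real.sin (a*l)/a)) :
    D 0 = 1 ∧ deriv D 0 = -(A11 + A22 + A33) ∧
    iteratedDeriv 2 D 0 = ρ - 3/2 + c/2 ∧
    iteratedDeriv 4 D 0 = -((1 + c)/4) * (-5 + 3*c + 4*ρ + 16*H13) ∧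
    iteratedDeriv 6 D 0 = ((1 + c)^2/8) * (6*ρ + 48*H13 + 5*c - 7) := by
  have hs : 0 < (1 + c) / 2 := by linarith [hc.1]
  have ha0 : a ≠ 0 := ha ▸ (Real.sqrt_pos.mpr hs).ne'
  have ha2 : a ^ 2 = (1 + c) / 2 := ha ▸ Real.sq_sqrt hs.le
  have hDtrig : D = trigPoly a (1 - C (A11 + A33) * X + C H13 * X ^ 2)
      (C (-A22) + C (H12 + H23) * X - C K * X ^ 2) := by
    funext l
    simp only [hD, trigPoly, eval_add, eval_sub, eval_mul, eval_C, eval_X, eval_pow, eval_one]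
    ring
  rw [show D 0 = iteratedDeriv 0 D 0 from rfl, ← iteratedDeriv_one, hDtrig]
  simp only [iteratedDeriv_trigPoly_zero ha0, Function.iterate_succ_apply',
    Function.iterate_zero_apply, coeff_trigPolyStep_fst, coeff_trigPolyStep_snd]
  simp [coeff_X, coeff_one, coeff_C, ha2, hρ]
  refine ⟨?_, ?_, ?_, ?_⟩ <;> ring

theorem detQ_derivs_S2xR2 (c : ℝ) (hc : c ∈ Set.Ioo (-1 : ℝ) 1)
    (a : ℝ) (ha : a = Real.sqrt ((1 + c)/2))
    (A11 A12 A13 A22 A23 A33 H12 H13 H23 K ρ : ℝ)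
    (hH12 : H12 = A11*A22 - A12^2)
    (hH13 : H13 = A11*A33 - A13^2)
    (hH23 : H23 = A22*A33 - A23^2)
    (hK : K = A11*A22*A33 + 2*A12*A13*A23 - A11*A23^2 - A22*A13^2 - A33*A12^2)
    (hρ : ρ = 2*(H12 + H13 + H23) + 1 - c)
    (D : ℝ → ℝ)
    (hD : ∀ l : ℝ, D l =
      (1 - l*A11) * Real.cos (a*l)
      + (-A22 + l*H12) * (Real.sin (a*l)/a)
      + (-A33 + l*H13) * l * Real.cos (a*l)
      + (H23 - l*K) * l * (Real.sin (a*l)/a)) :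
    D 0 = 1 ∧ deriv D 0 = -(A11 + A22 + A33) ∧
    iteratedDeriv 2 D 0 = ρ - 3/2 + c/2 ∧
    iteratedDeriv 4 D 0 = -((1 + c)/4) * (-5 + 3*c + 4*ρ + 16*H13) ∧
    iteratedDeriv 6 D 0 = ((1 + c)^2/8) * (6*ρ + 48*H13 + 5*c - 7) :=
  detQ_derivs_S2xR2_general c hc a ha A11 A22 A33 H12 H13 H23 K ρ hρ D hD
end

section
/- Let 0 < c < 1, let V0 and W0 be orthonormal vectors in ℝ² (with its standard inner product), and let X0 ∈ ℝ². Define Ψ : ℝ³ → ℝ³ × ℝ² by Ψ(t,r,s) = (cosh(t·√c)·γ1(r) + sinh(t·√c)·N(r), X0 + s·V0 + t·√(1−c)·W0), where γ1(r) = ((2 + r²)/2, r, r²/2) and N(r) = (r²/2, r, (r² − 2)/2). Then Ψ is smooth and, at every point of ℝ³, the (Fréchet) derivative of Ψ is injective; that is, Ψ is an immersion. -/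
theorem Psi_is_smooth_immersion
    (c : ℝ) (hc0 : 0 < c) (hc1 : c < 1)
    (V0 W0 X0 : EuclideanSpace ℝ (Fin 2))
    (hV0 : ‖V0‖ = 1) (hW0 : ‖W0‖ = 1) (hVW : inner ℝ V0 W0 = (0 : ℝ))
    (γ1 N : ℝ → ℝ × ℝ × ℝ)
    (hγ1 : ∀ r : ℝ, γ1 r = ((2 + r^2)/2, r, r^2/2))
    (hN : ∀ r : ℝ, N r = (r^2/2, r, (r^2 - 2)/2))
    (Ψ : ℝ × ℝ × ℝ → (ℝ × ℝ × ℝ) × EuclideanSpace ℝ (Fin 2))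
    (hΨ : ∀ t r s : ℝ, Ψ (t, r, s) =
      (Real.cosh (t * Real.sqrt c) • γ1 r + Real.sinh (t * Real.sqrt c) • N r,
       X0 + s • V0 + (t * Real.sqrt (1 - c)) • W0)) :
    ContDiff ℝ (⊤ : ℕ∞) Ψ ∧ ∀ x : ℝ × ℝ × ℝ, Function.Injective (fderiv ℝ Ψ x) := by
  have hfun : Ψ = fun p : ℝ × ℝ × ℝ =>
      (Real.cosh (p.1 * Real.sqrt c) • (((2 + p.2.1^2)/2, p.2.1, p.2.1^2/2) : ℝ×ℝ×ℝ)
         + Real.sinh (p.1 * Real.sqrt c) • ((p.2.1^2/2, p.2.1, (p.2.1^2 - 2)/2) : ℝ×ℝ×ℝ),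
       X0 + p.2.2 • V0 + (p.1 * Real.sqrt (1 - c)) • W0) := by
    funext p
    obtain ⟨t, r, s⟩ := p
    rw [hΨ, hγ1, hN]
  have smooth : ContDiff ℝ (⊤ : ℕ∞) Ψ := by
    rw [hfun]
    have hr : ContDiff ℝ (⊤ : ℕ∞) fun p : ℝ×ℝ×ℝ => p.2.1 := contDiff_fst.comp contDiff_snd
    have hs : ContDiff ℝ (⊤ : ℕ∞) fun p : ℝ×ℝ×ℝ => p.2.2 := contDiff_snd.comp contDiff_snd
    have ht : ContDiff ℝ (⊤ : ℕ∞) fun p : ℝ×ℝ×ℝ => p.1 := contDiff_fst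
    have hch : ContDiff ℝ (⊤ : ℕ∞) fun p : ℝ×ℝ×ℝ => Real.cosh (p.1 * Real.sqrt c) :=
      Real.contDiff_cosh.comp (ht.mul contDiff_const)
    have hsh : ContDiff ℝ (⊤ : ℕ∞) fun p : ℝ×ℝ×ℝ => Real.sinh (p.1 * Real.sqrt c) :=
      Real.contDiff_sinh.comp (ht.mul contDiff_const)
    have h1 : ContDiff ℝ (⊤ : ℕ∞) fun p : ℝ×ℝ×ℝ => (((2 + p.2.1^2)/2, p.2.1, p.2.1^2/2) : ℝ×ℝ×ℝ) :=
      ((contDiff_const.add (hr.pow 2)).div_const 2).prodMk (hr.prodMk ((hr.pow 2).div_const 2))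
    have h2 : ContDiff ℝ (⊤ : ℕ∞) fun p : ℝ×ℝ×ℝ => ((p.2.1^2/2, p.2.1, (p.2.1^2 - 2)/2) : ℝ×ℝ×ℝ) :=
      ((hr.pow 2).div_const 2).prodMk (hr.prodMk (((hr.pow 2).sub contDiff_const).div_const 2))
    exact ((hch.smul h1).add (hsh.smul h2)).prodMk
      ((contDiff_const.add (hs.smul contDiff_const)).add
        ((ht.mul contDiff_const).smul contDiff_const))
  refine ⟨smooth, fun x => ?_⟩
  obtain ⟨t, r, s⟩ := x
  have hD : HasFDerivAt Ψ (fderiv ℝ Ψ (t, r, s)) (t, r, s) :=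
    (smooth.differentiable (by simp) (t, r, s)).hasFDerivAt
  set D := fderiv ℝ Ψ (t, r, s) with hDdef
  rw [injective_iff_map_eq_zero]
  rintro ⟨v1, v2, v3⟩ hv
  -- useful inner product facts
  have hWV : (inner ℝ W0 V0 : ℝ) = 0 := by rw [real_inner_comm]; exact hVW
  have hWW : (inner ℝ W0 W0 : ℝ) = 1 := by
    rw [real_inner_self_eq_norm_sq, hW0]; norm_num
  have hVV : (inner ℝ V0 V0 : ℝ) = 1 := by
    rw [real_inner_self_eq_norm_sq, hV0]; norm_num
  have hΨ2 : ∀ p : ℝ × ℝ × ℝ, (Ψ p).2 = X0 + p.2.2 • V0 + (p.1 * Real.sqrt (1-c)) • W0 := by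
    rintro ⟨t', r', s'⟩; rw [hΨ]
  have hΨ1 : ∀ p : ℝ × ℝ × ℝ,
      (Ψ p).1.2.1 = Real.exp (p.1 * Real.sqrt c) * p.2.1 := by
    rintro ⟨t', r', s'⟩
    rw [hΨ, hγ1, hN]
    show Real.cosh (t' * Real.sqrt c) * r' + Real.sinh (t' * Real.sqrt c) * r'
      = Real.exp (t' * Real.sqrt c) * r'
    rw [← add_mul, Real.cosh_add_sinh]
  -- CLMs
  set Pfst : (ℝ×ℝ×ℝ) × EuclideanSpace ℝ (Fin 2) →L[ℝ] ℝ×ℝ×ℝ :=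
    ContinuousLinearMap.fst ℝ _ _ with hPfst
  set Psnd : (ℝ×ℝ×ℝ) × EuclideanSpace ℝ (Fin 2) →L[ℝ] EuclideanSpace ℝ (Fin 2) :=
    ContinuousLinearMap.snd ℝ _ _ with hPsnd
  set fst3 : ℝ×ℝ×ℝ →L[ℝ] ℝ := ContinuousLinearMap.fst ℝ ℝ (ℝ×ℝ) with hfst3
  set mid3 : ℝ×ℝ×ℝ →L[ℝ] ℝ :=
    (ContinuousLinearMap.fst ℝ ℝ ℝ).comp (ContinuousLinearMap.snd ℝ ℝ (ℝ×ℝ)) with hmid3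
  set thd3 : ℝ×ℝ×ℝ →L[ℝ] ℝ :=
    (ContinuousLinearMap.snd ℝ ℝ ℝ).comp (ContinuousLinearMap.snd ℝ ℝ (ℝ×ℝ)) with hthd3
  -- Step 1: v1 = 0, via ⟪W0, (Ψ ·).2⟫
  have hv1 : v1 = 0 := by
    set πb : (ℝ×ℝ×ℝ) × EuclideanSpace ℝ (Fin 2) →L[ℝ] ℝ := (innerSL ℝ W0).comp Psnd with hπb
    have hA : HasFDerivAt (fun p : ℝ×ℝ×ℝ => (inner ℝ W0 (Ψ p).2 : ℝ))
        (πb.comp D) (t, r, s) := πb.hasFDerivAt.comp _ hD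
    have e1 : (fun p : ℝ×ℝ×ℝ => (inner ℝ W0 (Ψ p).2 : ℝ))
        = fun p : ℝ×ℝ×ℝ => (inner ℝ W0 X0 : ℝ) + p.1 * Real.sqrt (1-c) := by
      funext p
      rw [hΨ2]
      rw [inner_add_right, inner_add_right, real_inner_smul_right, real_inner_smul_right,
        hWV, hWW]
      ring
    have hB : HasFDerivAt (fun p : ℝ×ℝ×ℝ => (inner ℝ W0 X0 : ℝ) + p.1 * Real.sqrt (1-c))
        ((Real.sqrt (1-c)) • fst3) (t, r, s) := by
      have := (hasFDerivAt_const (inner ℝ W0 X0 : ℝ) ((t,r,s) : ℝ×ℝ×ℝ)).add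
        (fst3.hasFDerivAt.mul_const (Real.sqrt (1-c)))
      simpa [hfst3, Pi.add_def] using this
    rw [e1] at hA
    have heq := hA.unique hB
    have := congrArg (fun L => L (v1, v2, v3)) heq
    simp only [ContinuousLinearMap.comp_apply, ContinuousLinearMap.smul_apply] at this
    rw [hv] at this
    simp [hfst3] at this
    have hpos : Real.sqrt (1-c) ≠ 0 := Real.sqrt_ne_zero'.mpr (by linarith)
    tauto
  -- Step 2: v3 = 0, via ⟪V0, (Ψ ·).2⟫
  have hv3 : v3 = 0 := by
    set πc : (ℝ×ℝ×ℝ) × EuclideanSpace ℝ (Fin 2) →L[ℝ] ℝ := (innerSL ℝ V0).comp Psnd with hπc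
    have hA : HasFDerivAt (fun p : ℝ×ℝ×ℝ => (inner ℝ V0 (Ψ p).2 : ℝ))
        (πc.comp D) (t, r, s) := πc.hasFDerivAt.comp _ hD
    have e1 : (fun p : ℝ×ℝ×ℝ => (inner ℝ V0 (Ψ p).2 : ℝ))
        = fun p : ℝ×ℝ×ℝ => (inner ℝ V0 X0 : ℝ) + p.2.2 := by
      funext p
      rw [hΨ2]
      rw [inner_add_right, inner_add_right, real_inner_smul_right, real_inner_smul_right,
        hVV, hVW]
      ring
    have hB : HasFDerivAt (fun p : ℝ×ℝ×ℝ => (inner ℝ V0 X0 : ℝ) + p.2.2) thd3 (t, r, s) := by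
      have := (hasFDerivAt_const (inner ℝ V0 X0 : ℝ) ((t,r,s) : ℝ×ℝ×ℝ)).add thd3.hasFDerivAt
      simpa [hthd3, Pi.add_def] using this
    rw [e1] at hA
    have heq := hA.unique hB
    have := congrArg (fun L => L (v1, v2, v3)) heq
    simp only [ContinuousLinearMap.comp_apply] at this
    rw [hv] at this
    simpa [hthd3] using this.symm
  -- Step 3: v2 = 0, via (Ψ ·).1.2.1
  have hv2 : v2 = 0 := by
    set πa : (ℝ×ℝ×ℝ) × EuclideanSpace ℝ (Fin 2) →L[ℝ] ℝ := mid3.comp Pfst with hπa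
    have hA : HasFDerivAt (fun p : ℝ×ℝ×ℝ => (Ψ p).1.2.1) (πa.comp D) (t, r, s) :=
      πa.hasFDerivAt.comp _ hD
    have e1 : (fun p : ℝ×ℝ×ℝ => (Ψ p).1.2.1)
        = fun p : ℝ×ℝ×ℝ => Real.exp (p.1 * Real.sqrt c) * p.2.1 := funext hΨ1
    have hlin : HasFDerivAt (fun p : ℝ×ℝ×ℝ => p.1 * Real.sqrt c)
        ((Real.sqrt c) • fst3) (t, r, s) := by
      simpa [hfst3] using fst3.hasFDerivAt.mul_const (Real.sqrt c)
    have hexp : HasFDerivAt (fun p : ℝ×ℝ×ℝ => Real.exp (p.1 * Real.sqrt c))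
        (Real.exp (t * Real.sqrt c) • ((Real.sqrt c) • fst3)) (t, r, s) :=
      hlin.exp
    have hB := hexp.mul (mid3.hasFDerivAt (x := ((t,r,s) : ℝ×ℝ×ℝ)))
    rw [e1] at hA
    have heq := hA.unique hB
    have := congrArg (fun L => L (v1, v2, v3)) heq
    simp only [ContinuousLinearMap.comp_apply] at this
    rw [hv] at this
    simp [hfst3, hmid3, hv1] at this
    exact this
  simp [hv1, hv2, hv3, Prod.ext_iff]
end
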